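/- (Weyl's theorem / Schur–Weyl duality, commutant form, one direction.) For every N ≥ 1, a ℂ-linear endomorphism T of (ℂ²)^{⊗N} commutes with all permutation operators P_π, π ∈ S_N, if and only if T lies in the ℂ-linear span of {g^{⊗N} : g ∈ GL₂(ℂ)}. -/

import Mathlib

noncomputable section

/-- `(ℂ²)^{⊗N}` realized as functions `(Fin N → Fin 2) → ℂ`; operators on it are matrices
indexed by `Fin N → Fin 2`. -/
abbrev TensorOps (N : ℕ) := Matrix (Fin N → Fin 2) (Fin N → Fin 2) ℂ

/-- The `N`-fold Kronecker power `g^{⊗N}` of a `2 × 2` matrix `g`, acting on `(ℂ²)^{⊗N}`. -/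
def kron (N : ℕ) (g : Matrix (Fin 2) (Fin 2) ℂ) : TensorOps N :=
  Matrix.of fun t s => ∏ j : Fin N, g (t j) (s j)

/-- The permutation operator `P_π` on `(ℂ²)^{⊗N}`, permuting the tensor factors:
`P_π (v_1 ⊗ ⋯ ⊗ v_N) = v_{π⁻¹(1)} ⊗ ⋯ ⊗ v_{π⁻¹(N)}`. -/
def permOp (N : ℕ) (π : Equiv.Perm (Fin N)) : TensorOps N :=
  Matrix.of fun t s => if s = t ∘ π then 1 else 0

/-!
Every `g^{⊗N}` commutes with the permutations of the tensor factors, hence so does their span.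
Conversely, let `φ` be a linear functional vanishing on `g^{⊗N}` for all invertible `g`. Then
`g ↦ φ (g^{⊗N})` is a polynomial in the entries of `g` which vanishes wherever `det g ≠ 0`, so it
is the zero polynomial. Its coefficient of a monomial is the sum of `φ` over the matrix units
`E_{t,s}` whose sequence of pairs `(t j, s j)` has a prescribed multiset of values. Two index
pairs with the same multiset differ by a permutation of the factors, so a `T` commuting with all
`P_π` is constant on these classes and `φ T = 0`. By duality, `T` lies in the span.
-/

open MvPolynomial

theorem Equiv.Perm.exists_eq_comp_of_sum_single_eq {ι β : Type*} [Fintype ι] [DecidableEq β]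
    {f g : ι → β} (h : ∑ i, Finsupp.single (f i) 1 = ∑ i, Finsupp.single (g i) 1) :
    ∃ σ : Equiv.Perm ι, f = g ∘ σ := by
  have card_fiber : ∀ (u : ι → β) (b : β),
      (∑ i, Finsupp.single (u i) 1 : β →₀ ℕ) b = Fintype.card {i // u i = b} := by
    intro u b
    rw [Fintype.card_subtype, Finsupp.finsetSum_apply, Finset.card_filter]
    exact Finset.sum_congr rfl fun i _ => Finsupp.single_apply
  have e : ∀ b, {i // f i = b} ≃ {i // g i = b} := fun b =>
    Fintype.equivOfCardEq (by rw [← card_fiber, ← card_fiber, h])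
  exact ⟨Equiv.ofFiberEquiv e, funext fun i => (Equiv.ofFiberEquiv_map e i).symm⟩

theorem Fintype.sum_mul_eq_zero_of_sum_fiber_eq_zero {ι κ R : Type*} [Fintype ι] [DecidableEq κ]
    [NonUnitalNonAssocSemiring R] (f : ι → κ) {a c : ι → R}
    (ha : ∀ i j, f i = f j → a i = a j) (hc : ∀ k, ∑ i with f i = k, c i = 0) :
    ∑ i, a i * c i = 0 := by
  rw [← Finset.sum_fiberwise_of_maps_to fun i _ => Finset.mem_image_of_mem f (Finset.mem_univ i)]
  refine Finset.sum_eq_zero fun k hk => ?_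
  obtain ⟨i₀, -, rfl⟩ := Finset.mem_image.mp hk
  rw [Finset.sum_congr rfl fun i hi => by rw [ha i i₀ (Finset.mem_filter.mp hi).2],
    ← Finset.mul_sum, hc, mul_zero]

theorem Matrix.dual_apply_eq_sum {m n R : Type*} [Fintype m] [Fintype n] [DecidableEq m]
    [DecidableEq n] [CommSemiring R] (φ : Module.Dual R (Matrix m n R)) (M : Matrix m n R) :
    φ M = ∑ p : m × n, M p.1 p.2 * φ (Matrix.single p.1 p.2 1) := by
  conv_lhs => rw [Matrix.matrix_eq_sum_single M]
  simp only [map_sum, Fintype.sum_prod_type]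
  refine Finset.sum_congr rfl fun i _ => Finset.sum_congr rfl fun j _ => ?_
  rw [← smul_eq_mul, ← map_smul, Matrix.smul_single, smul_eq_mul, mul_one]

theorem MvPolynomial.eq_zero_of_eval_eq_zero_of_isUnit {n K : Type*} [Fintype n] [DecidableEq n]
    [Field K] [Infinite K] {P : MvPolynomial (n × n) K}
    (h : ∀ g : Matrix n n K, IsUnit g → eval (fun q => g q.1 q.2) P = 0) : P = 0 := by
  have hdet : P * (Matrix.mvPolynomialX n n K).det = 0 := by
    refine MvPolynomial.funext fun x => ?_
    rw [map_mul, map_zero, Matrix.eval_det_mvPolynomialX, mul_eq_zero]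
    have hx : x = fun q => Matrix.of (fun i j => x (i, j)) q.1 q.2 := rfl
    by_cases hx₀ : (Matrix.of fun i j => x (i, j)).det = 0
    · exact Or.inr hx₀
    · rw [hx]
      exact Or.inl (h _ ((Matrix.isUnit_iff_isUnit_det _).mpr (Ne.isUnit hx₀)))
  exact (mul_eq_zero.mp hdet).resolve_right (Matrix.det_mvPolynomialX_ne_zero n K)

section

variable {N : ℕ}

theorem mul_permOp_apply (M : TensorOps N) (π : Equiv.Perm (Fin N)) (t s : Fin N → Fin 2) :
    (M * permOp N π) t s = M t (s ∘ ⇑π⁻¹) := by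
  have hs : ∀ u : Fin N → Fin 2, s = u ∘ π ↔ s ∘ ⇑π⁻¹ = u := fun u => by
    rw [Equiv.Perm.inv_def, Equiv.comp_symm_eq]
  simp only [Matrix.mul_apply, permOp, Matrix.of_apply, mul_ite, mul_one, mul_zero, hs,
    Finset.sum_ite_eq, Finset.mem_univ, if_true]

theorem permOp_mul_apply (M : TensorOps N) (π : Equiv.Perm (Fin N)) (t s : Fin N → Fin 2) :
    (permOp N π * M) t s = M (t ∘ ⇑π) s := by
  simp [Matrix.mul_apply, permOp]

theorem mul_permOp_eq_permOp_mul_iff {T : TensorOps N} {π : Equiv.Perm (Fin N)} :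
    T * permOp N π = permOp N π * T ↔ ∀ t s, T (t ∘ π) (s ∘ π) = T t s := by
  rw [← Matrix.ext_iff]
  simp only [mul_permOp_apply, permOp_mul_apply]
  constructor
  · intro h t s
    simpa [Function.comp_assoc] using (h t (s ∘ π)).symm
  · intro h t s
    simpa [Function.comp_assoc] using (h t (s ∘ ⇑π⁻¹)).symm

theorem kron_apply_comp_perm (g : Matrix (Fin 2) (Fin 2) ℂ) (π : Equiv.Perm (Fin N))
    (t s : Fin N → Fin 2) : kron N g (t ∘ π) (s ∘ π) = kron N g t s :=
  Equiv.prod_comp π fun j => g (t j) (s j)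

def kronEntryDegree (t s : Fin N → Fin 2) : Fin 2 × Fin 2 →₀ ℕ :=
  ∑ j, Finsupp.single (t j, s j) 1

theorem exists_perm_of_kronEntryDegree_eq {t s t' s' : Fin N → Fin 2}
    (h : kronEntryDegree t s = kronEntryDegree t' s') :
    ∃ π : Equiv.Perm (Fin N), t = t' ∘ π ∧ s = s' ∘ π := by
  obtain ⟨π, hπ⟩ := Equiv.Perm.exists_eq_comp_of_sum_single_eq h
  exact ⟨π, funext fun j => congrArg Prod.fst (congrFun hπ j),
    funext fun j => congrArg Prod.snd (congrFun hπ j)⟩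

def kronPolynomial (φ : Module.Dual ℂ (TensorOps N)) : MvPolynomial (Fin 2 × Fin 2) ℂ :=
  ∑ p : (Fin N → Fin 2) × (Fin N → Fin 2),
    monomial (kronEntryDegree p.1 p.2) (φ (Matrix.single p.1 p.2 1))

theorem eval_kronPolynomial (φ : Module.Dual ℂ (TensorOps N)) (g : Matrix (Fin 2) (Fin 2) ℂ) :
    eval (fun q => g q.1 q.2) (kronPolynomial φ) = φ (kron N g) := by
  rw [Matrix.dual_apply_eq_sum φ (kron N g), kronPolynomial, map_sum]
  refine Finset.sum_congr rfl fun p _ => ?_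
  simp [kronEntryDegree, monomial_sum_index, kron, mul_comm, eval_monomial]

theorem coeff_kronPolynomial (φ : Module.Dual ℂ (TensorOps N)) (d : Fin 2 × Fin 2 →₀ ℕ) :
    coeff d (kronPolynomial φ) =
      ∑ p : (Fin N → Fin 2) × (Fin N → Fin 2) with kronEntryDegree p.1 p.2 = d,
        φ (Matrix.single p.1 p.2 1) := by
  simp [kronPolynomial, coeff_sum, coeff_monomial, Finset.sum_filter]

theorem dual_apply_eq_zero_of_forall_commute {φ : Module.Dual ℂ (TensorOps N)}
    (hφ : ∀ g, IsUnit g → φ (kron N g) = 0) {T : TensorOps N}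
    (hT : ∀ π, T * permOp N π = permOp N π * T) : φ T = 0 := by
  have hP : kronPolynomial φ = 0 :=
    eq_zero_of_eval_eq_zero_of_isUnit fun g hg => (eval_kronPolynomial φ g).trans (hφ g hg)
  rw [Matrix.dual_apply_eq_sum]
  refine Fintype.sum_mul_eq_zero_of_sum_fiber_eq_zero (fun p => kronEntryDegree p.1 p.2)
    (fun p q hpq => ?_) fun d => by rw [← coeff_kronPolynomial, hP, coeff_zero]
  obtain ⟨π, hp₁, hp₂⟩ := exists_perm_of_kronEntryDegree_eq hpq
  rw [hp₁, hp₂]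
  exact mul_permOp_eq_permOp_mul_iff.mp (hT π) q.1 q.2

end

theorem schurWeyl_commutant_of_permutations_general (N : ℕ) (T : TensorOps N) :
    (∀ π : Equiv.Perm (Fin N), T * permOp N π = permOp N π * T) ↔
      T ∈ Submodule.span ℂ
        {M : TensorOps N | ∃ g : Matrix (Fin 2) (Fin 2) ℂ, IsUnit g ∧ M = kron N g} := by
  constructor
  · intro hT
    by_contra hT'
    obtain ⟨φ, hφT, hφ⟩ := Submodule.exists_dual_map_eq_bot_of_notMem hT' inferInstance
    rw [← LinearMap.le_ker_iff_map, Submodule.span_le] at hφ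
    exact hφT (dual_apply_eq_zero_of_forall_commute (fun g hg => hφ ⟨g, hg, rfl⟩) hT)
  · intro hT π
    refine ((Subalgebra.mem_centralizer_iff ℂ (s := Set.range (permOp N))).mp ?_ _ ⟨π, rfl⟩).symm
    refine (Submodule.span_le (p := (Subalgebra.centralizer ℂ _).toSubmodule)).mpr ?_ hT
    rintro - ⟨g, -, rfl⟩ - ⟨σ, rfl⟩
    exact (mul_permOp_eq_permOp_mul_iff.mpr (kron_apply_comp_perm g σ)).symm

/-- Schur–Weyl duality (commutant form, one direction): an endomorphism of `(ℂ²)^{⊗N}`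
commutes with all permutation operators `P_π`, `π ∈ S_N`, iff it lies in the ℂ-linear span
of `{g^{⊗N} : g ∈ GL₂(ℂ)}`. -/
theorem schurWeyl_commutant_of_permutations (N : ℕ) (hN : 1 ≤ N) (T : TensorOps N) :
    (∀ π : Equiv.Perm (Fin N), T * permOp N π = permOp N π * T) ↔
      T ∈ Submodule.span ℂ
        {M : TensorOps N | ∃ g : Matrix (Fin 2) (Fin 2) ℂ, IsUnit g ∧ M = kron N g} :=
  schurWeyl_commutant_of_permutations_general N T
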